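/- Define A_r(m) by A_0(m) = 1 and A_r(m) = Σ_{j=1}^{r} (-1)^{j-1} binom(m, j) A_{r-j}(m). Then for all m ≥ 1 and r ≥ 1, A_r(m) = Σ_{l=1}^{m} A_{r-1}(l). -/

import Mathlib

/-!
The generating function `F m = ∑ r, A r m * X ^ r` satisfies `(1 - X) ^ m * F m = 1`: its
coefficient of `X ^ (r + 1)` is exactly the defining recursion. Cancelling `(1 - X) ^ m` in
`(1 - X) ^ (m + 1) * F (m + 1) = (1 - X) ^ m * F m` gives `(1 - X) * F (m + 1) = F m`, that is
`A (r + 1) (m + 1) - A (r + 1) m = A r (m + 1)`, and the claim follows by telescoping in `m`.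
-/

/-- The iterated-difference coefficients `A r m`. -/
def iterDiffCoeff (m : ℕ) : ℕ → ℤ
  | 0 => 1
  | (r + 1) =>
      ∑ j ∈ Finset.range (r + 1),
        (-1) ^ j * (m.choose (j + 1) : ℤ) * iterDiffCoeff m (r - j)

open Finset PowerSeries

theorem PowerSeries.coeff_one_sub_X_pow {R : Type*} [CommRing R] (m k : ℕ) :
    coeff k ((1 - X : R⟦X⟧) ^ m) = (-1) ^ k * m.choose k := by
  induction m generalizing k with
  | zero => cases k <;> simp [coeff_one]
  | succ m ih =>
    rw [pow_succ', sub_mul, one_mul, map_sub]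
    cases k with
    | zero => simp [ih]
    | succ k =>
      rw [coeff_succ_X_mul, ih, ih, Nat.choose_succ_succ', Nat.cast_add]
      ring

noncomputable def iterDiffSeries (m : ℕ) : ℤ⟦X⟧ := mk (iterDiffCoeff m)

theorem one_sub_X_pow_mul_iterDiffSeries (m : ℕ) : (1 - X) ^ m * iterDiffSeries m = 1 := by
  ext n
  rw [coeff_mul, Nat.sum_antidiagonal_eq_sum_range_succ
    (fun i j => coeff i ((1 - X : ℤ⟦X⟧) ^ m) * coeff j (iterDiffSeries m))]
  cases n with
  | zero => simp [iterDiffSeries, iterDiffCoeff]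
  | succ r =>
    rw [sum_range_succ', coeff_one, if_neg r.succ_ne_zero]
    simp only [iterDiffSeries, coeff_mk, coeff_one_sub_X_pow, Nat.add_sub_add_right, Nat.sub_zero,
      pow_zero, Nat.choose_zero_right, Nat.cast_one, one_mul, iterDiffCoeff, ← sum_add_distrib]
    exact sum_eq_zero fun _ _ => by ring

theorem one_sub_X_mul_iterDiffSeries_succ (m : ℕ) :
    (1 - X) * iterDiffSeries (m + 1) = iterDiffSeries m := by
  have h : (1 - X : ℤ⟦X⟧) ^ m ≠ 0 :=
    pow_ne_zero _ fun h => by simpa using congrArg constantCoeff h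
  apply mul_left_cancel₀ h
  rw [← mul_assoc, ← pow_succ, one_sub_X_pow_mul_iterDiffSeries, one_sub_X_pow_mul_iterDiffSeries]

theorem iterDiffCoeff_succ_sub (m r : ℕ) :
    iterDiffCoeff (m + 1) (r + 1) - iterDiffCoeff m (r + 1) = iterDiffCoeff (m + 1) r := by
  have h := congrArg (coeff (r + 1)) (one_sub_X_mul_iterDiffSeries_succ m)
  rw [sub_mul, one_mul, map_sub, coeff_succ_X_mul] at h
  simp only [iterDiffSeries, coeff_mk] at h
  linarith

theorem iterDiffCoeff_succ_eq_sum_Icc (m r : ℕ) :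
    iterDiffCoeff m (r + 1) = ∑ l ∈ Icc 1 m, iterDiffCoeff l r := by
  induction m with
  | zero => simp [iterDiffCoeff]
  | succ m ih =>
    rw [sum_Icc_succ_top (by omega), ← ih, ← iterDiffCoeff_succ_sub m r, add_sub_cancel]

theorem iterDiffCoeff_rec_general (m r : ℕ) (hr : 1 ≤ r) :
    iterDiffCoeff m r = ∑ l ∈ Finset.Icc 1 m, iterDiffCoeff l (r - 1) := by
  obtain ⟨s, rfl⟩ : ∃ s, r = s + 1 := ⟨r - 1, by omega⟩
  exact iterDiffCoeff_succ_eq_sum_Icc m s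

/-- For all `m ≥ 1` and `r ≥ 1`, `A r m = Σ_{l=1}^m A (r-1) l`. -/
theorem iterDiffCoeff_rec (m r : ℕ) (hm : 1 ≤ m) (hr : 1 ≤ r) :
    iterDiffCoeff m r = ∑ l ∈ Finset.Icc 1 m, iterDiffCoeff l (r - 1) :=
  iterDiffCoeff_rec_general m r hr
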